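/- For every p ∈ [1,∞) there exists a constant c_p > 0 such that for all t ∈ [0,1] and all N ≥ 0, ∫_ℝ | ∫_{N−1/100}^{N+1/100} e^{2πi(xξ + tξ²)} dξ |^p dx ≥ c_p. In particular the left-hand side is independent of N, as seen from the change of variables s = x + 2Nt, η = ξ − N. -/

import Mathlib

open MeasureTheory Real Complex
open scoped ENNReal

noncomputable section

lemma half_le_cos {y : ℝ} (h1 : |y| ≤ 1) : (1:ℝ)/2 ≤ Real.cos y := by
  have := Real.one_sub_sq_div_two_le_cos (x := y)
  have h2 : y^2 ≤ 1 := by rw [← _root_.sq_abs]; exact pow_le_one₀ (abs_nonneg _) h1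
  linarith

lemma osc_key (t N x : ℝ) (ht0 : 0 ≤ t) (ht1 : t ≤ 1) (hx : |x + 2*N*t| ≤ 1) :
    (1:ℝ)/100 ≤ ‖∫ ξ in Set.Icc (N - 1 / 100) (N + 1 / 100),
        Complex.exp ((2 * Real.pi * (x * ξ + t * ξ ^ 2) : ℝ) * Complex.I)‖ := by
  set a : ℝ := 2 * Real.pi * (x * N + t * N ^ 2) with ha
  set ψ : ℝ → ℝ := fun ξ => 2 * Real.pi * (x * ξ + t * ξ ^ 2) - a with hψ
  have hcont : Continuous fun ξ : ℝ => Complex.exp ((ψ ξ : ℝ) * Complex.I) := by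
    fun_prop
  have hint : IntegrableOn (fun ξ : ℝ => Complex.exp ((ψ ξ : ℝ) * Complex.I))
      (Set.Icc (N - 1/100) (N + 1/100)) volume :=
    hcont.integrableOn_Icc
  -- pointwise bound on ψ
  have hψbound : ∀ ξ ∈ Set.Icc (N - 1/100) (N + 1/100), |ψ ξ| ≤ 1 := by
    intro ξ hξ
    have h1 : |ξ - N| ≤ 1/100 := by
      rw [abs_le]; constructor <;> [linarith [hξ.1]; linarith [hξ.2]]
    have hπ : Real.pi ≤ 4 := Real.pi_le_four
    have hπ0 : 0 < Real.pi := Real.pi_pos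
    have hrw : ψ ξ = 2 * Real.pi * ((x + 2*N*t) * (ξ - N) + t * (ξ - N)^2) := by
      simp only [hψ, ha]; ring
    rw [hrw, abs_mul]
    have h2 : |(x + 2*N*t) * (ξ - N) + t * (ξ - N)^2| ≤ 1/100 + 1/10000 := by
      refine (abs_add_le _ _).trans ?_
      have e1 : |(x + 2*N*t) * (ξ - N)| ≤ 1 * (1/100) := by
        rw [abs_mul]; exact mul_le_mul hx h1 (abs_nonneg _) zero_le_one
      have e2 : |t * (ξ - N)^2| ≤ 1 * (1/100)^2 := by
        rw [abs_mul, _root_.abs_pow]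
        have : |t| ≤ 1 := abs_le.2 ⟨by linarith, ht1⟩
        exact mul_le_mul this (pow_le_pow_left₀ (abs_nonneg _) h1 2) (by positivity) zero_le_one
      nlinarith
    have h3 : |2 * Real.pi| ≤ 8 := by rw [abs_of_pos (by positivity)]; linarith
    nlinarith [abs_nonneg ((x + 2*N*t) * (ξ - N) + t * (ξ - N)^2)]
  have hcos : ∀ ξ ∈ Set.Icc (N - 1/100) (N + 1/100), (1:ℝ)/2 ≤ Real.cos (ψ ξ) := by
    intro ξ hξ
    exact half_le_cos (hψbound ξ hξ)
  -- the re-phased integral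
  have hre : (1:ℝ)/100 ≤ (∫ ξ in Set.Icc (N - 1/100) (N + 1/100),
      Complex.exp ((ψ ξ : ℝ) * Complex.I)).re := by
    rw [← RCLike.re_to_complex, ← integral_re hint]
    simp only [RCLike.re_to_complex]
    have hvol : (volume (Set.Icc (N - 1/100) (N + 1/100))).toReal = 1/50 := by
      rw [Real.volume_Icc]; rw [ENNReal.toReal_ofReal (by linarith)]; ring
    have := setIntegral_ge_of_const_le_real (c := (1:ℝ)/2) (f := fun ξ => Real.cos (ψ ξ))
      measurableSet_Icc (by rw [Real.volume_Icc]; exact ENNReal.ofReal_ne_top) hcos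
      ((Real.continuous_cos.comp (by fun_prop)).integrableOn_Icc)
    rw [measureReal_def, hvol] at this
    calc (1:ℝ)/100 = 1/2 * (1/50) := by norm_num
      _ ≤ ∫ ξ in Set.Icc (N - 1/100) (N + 1/100), Real.cos (ψ ξ) := this
      _ = _ := by
          refine setIntegral_congr_fun measurableSet_Icc (fun ξ _ => ?_)
          rw [Complex.exp_ofReal_mul_I_re]
  have hmul : Complex.exp (-(a:ℂ) * Complex.I) * (∫ ξ in Set.Icc (N - 1/100) (N + 1/100),
        Complex.exp ((2 * Real.pi * (x * ξ + t * ξ ^ 2) : ℝ) * Complex.I))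
      = ∫ ξ in Set.Icc (N - 1/100) (N + 1/100), Complex.exp ((ψ ξ : ℝ) * Complex.I) := by
    rw [← integral_const_mul]
    refine setIntegral_congr_fun measurableSet_Icc (fun ξ _ => ?_)
    rw [← Complex.exp_add]
    congr 1
    simp only [hψ]
    push_cast
    ring
  have hnorm : ‖∫ ξ in Set.Icc (N - 1/100) (N + 1/100),
      Complex.exp ((2 * Real.pi * (x * ξ + t * ξ ^ 2) : ℝ) * Complex.I)‖
      = ‖∫ ξ in Set.Icc (N - 1/100) (N + 1/100), Complex.exp ((ψ ξ : ℝ) * Complex.I)‖ := by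
    rw [← hmul, norm_mul]
    simp [Complex.norm_exp]
  rw [hnorm]
  exact hre.trans (Complex.re_le_norm _)

/-- **Uniform lower bound for a one-dimensional oscillatory integral.**
For every `p ∈ [1,∞)` there is `c_p > 0` such that for all `t ∈ [0,1]` and `N ≥ 0`,
`∫_ℝ |∫_{N−1/100}^{N+1/100} e^{2πi(xξ+tξ²)} dξ|^p dx ≥ c_p`; in particular the
left-hand side is independent of `N`. -/
theorem oscillatory_integral_lower_bound (p : ℝ) (hp : 1 ≤ p) :
    ∃ c : ℝ, 0 < c ∧
      ∀ t ∈ Set.Icc (0 : ℝ) 1, ∀ N : ℝ, 0 ≤ N →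
        ENNReal.ofReal c ≤
          ∫⁻ x : ℝ, ENNReal.ofReal
            (‖∫ ξ in Set.Icc (N - 1 / 100) (N + 1 / 100),
                Complex.exp ((2 * Real.pi * (x * ξ + t * ξ ^ 2) : ℝ) * Complex.I)‖ ^ p) := by
  have hp0 : 0 ≤ p := le_trans zero_le_one hp
  refine ⟨((1:ℝ)/100) ^ p, Real.rpow_pos_of_pos (by norm_num) p, ?_⟩
  intro t ht N hN
  set S : Set ℝ := Set.Icc (-(2*N*t) - 1) (-(2*N*t) + 1) with hS
  have hvol : volume S = ENNReal.ofReal 2 := by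
    rw [hS, Real.volume_Icc]
    congr 1
    ring
  calc ENNReal.ofReal (((1:ℝ)/100) ^ p)
      ≤ ENNReal.ofReal (((1:ℝ)/100) ^ p) * volume S := by
        refine le_mul_of_one_le_right zero_le ?_
        rw [hvol]
        exact ENNReal.one_le_ofReal.2 (by norm_num)
    _ = ∫⁻ x : ℝ, S.indicator (fun _ => ENNReal.ofReal (((1:ℝ)/100) ^ p)) x := by
        rw [lintegral_indicator_const (measurableSet_Icc)]
    _ ≤ _ := by
        refine lintegral_mono fun x => ?_
        by_cases hx : x ∈ S
        · rw [Set.indicator_of_mem hx]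
          refine ENNReal.ofReal_le_ofReal ?_
          refine Real.rpow_le_rpow (by norm_num) ?_ hp0
          refine osc_key t N x ht.1 ht.2 ?_
          rw [abs_le]
          exact ⟨by linarith [hx.1], by linarith [hx.2]⟩
        · rw [Set.indicator_of_notMem hx]
          exact zero_le
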